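/- Let Â be a Courant extension of a transitive Lie algebroid A with g = ker(π_A). Then the commutative square formed by g(Â) → A^∨ (induced by the pairing ⟨,⟩ : g(Â) ⊗ Ā → O_X), g(Â) → g (the projection), A^∨ → g^∨ (dual of the inclusion g → A), and g → g^∨ (induced pairing) is Cartesian; consequently g(Â) ≅ A^∨ ×_{g^∨} g canonically. -/

import Mathlib

/-!
Since `⟨h, ∂f⟩ = π(h) f`, elements of `g(Â) = ker π` are orthogonal to `Ω_Q`. Given a functional
`lam` on `Q` killing `Ω_Q` and `b ∈ g(Â)` with `lam = ⟨b, -⟩` on `g(Â)`, the functional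
`lam - ⟨b, -⟩` kills `ker π`, so by surjectivity of `π` it is `α ∘ π` for a one-form `α`, and
`h = b + i α` is the required element. It is unique because two solutions differ by an element of
`Ω_Q ≅ T_X^∨` orthogonal to all of `Q`, and such a one-form vanishes on `π(Q) = T_X`.
-/

noncomputable section

/-- The "vector fields" on the algebraic model of the space with function ring `O`. -/
abbrev Vec (O : Type*) [CommRing O] [Algebra ℂ O] := Derivation ℂ O O

/-- Algebraic model of a Courant `O`-algebroid: an `O`-module `Q` equipped with a
Leibniz bracket, an `O`-linear anchor into vector fields, a symmetric `O`-bilinear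
pairing, and a derivation `∂ : O → Q`, subject to the Courant axioms. -/
structure CourantAlgebroid (O : Type*) [CommRing O] [Algebra ℂ O]
    (Q : Type*) [AddCommGroup Q] [Module O Q] where
  bracket : Q → Q → Q
  bracket_add_left : ∀ q₁ q₂ q₃, bracket (q₁ + q₂) q₃ = bracket q₁ q₃ + bracket q₂ q₃
  bracket_add_right : ∀ q₁ q₂ q₃, bracket q₁ (q₂ + q₃) = bracket q₁ q₂ + bracket q₁ q₃
  anchor : Q →ₗ[O] Vec O
  pair : Q →ₗ[O] Q →ₗ[O] O
  pair_symm : ∀ q₁ q₂, pair q₁ q₂ = pair q₂ q₁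
  par : O → Q
  par_add : ∀ f g, par (f + g) = par f + par g
  par_mul : ∀ f g, par (f * g) = f • par g + g • par f
  anchor_par : ∀ f, anchor (par f) = 0
  anchor_bracket : ∀ q₁ q₂, anchor (bracket q₁ q₂) = ⁅anchor q₁, anchor q₂⁆
  jacobi : ∀ q q₁ q₂, bracket q (bracket q₁ q₂)
      = bracket (bracket q q₁) q₂ + bracket q₁ (bracket q q₂)
  leibniz : ∀ (q₁ q₂ : Q) (f : O), bracket q₁ (f • q₂) = f • bracket q₁ q₂ + anchor q₁ f • q₂
  invar : ∀ q q₁ q₂, pair (bracket q q₁) q₂ + pair q₁ (bracket q q₂)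
      = anchor q (pair q₁ q₂)
  bracket_par : ∀ (q : Q) (f : O), bracket q (par f) = par (anchor q f)
  pair_par : ∀ (q : Q) (f : O), pair q (par f) = anchor q f
  symm_bracket : ∀ q₁ q₂, bracket q₁ q₂ + bracket q₂ q₁ = par (pair q₁ q₂)

/-- `Ω_Q`: the `O`-submodule of `Q` generated by the image of the derivation `∂`. -/
def CourantAlgebroid.Omega {O : Type*} [CommRing O] [Algebra ℂ O]
    {Q : Type*} [AddCommGroup Q] [Module O Q] (C : CourantAlgebroid O Q) : Submodule O Q :=
  Submodule.span O (Set.range C.par)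

/-- Evaluation of vector fields at `f`, as an `O`-linear one-form `df`. -/
def evalForm (O : Type*) [CommRing O] [Algebra ℂ O] (f : O) : Vec O →ₗ[O] O where
  toFun ξ := ξ f
  map_add' ξ η := by simp
  map_smul' g ξ := by simp

theorem LinearMap.exists_comp_eq_of_ker_le {R M N P : Type*} [Ring R]
    [AddCommGroup M] [Module R M] [AddCommGroup N] [Module R N] [AddCommGroup P] [Module R P]
    {g : M →ₗ[R] N} (hg : Function.Surjective g) {φ : M →ₗ[R] P} (h : ker g ≤ ker φ) :
    ∃ α : N →ₗ[R] P, α ∘ₗ g = φ := by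
  refine ⟨(ker g).liftQ φ h ∘ₗ (g.quotKerEquivOfSurjective hg).symm.toLinearMap, ?_⟩
  ext q
  simp

namespace CourantAlgebroid

variable {O : Type*} [CommRing O] [Algebra ℂ O] {Q : Type*} [AddCommGroup Q] [Module O Q]
  (C : CourantAlgebroid O Q)

theorem Omega_le_ker_anchor : C.Omega ≤ LinearMap.ker C.anchor :=
  Submodule.span_le.mpr (Set.range_subset_iff.mpr C.anchor_par)

theorem pair_eq_zero_of_mem_ker_anchor_of_mem_Omega {h w : Q}
    (hh : h ∈ LinearMap.ker C.anchor) (hw : w ∈ C.Omega) : C.pair h w = 0 := by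
  have hle : C.Omega ≤ LinearMap.ker (C.pair h) := by
    refine Submodule.span_le.mpr (Set.range_subset_iff.mpr fun f => ?_)
    simp [C.pair_par, LinearMap.mem_ker.mp hh]
  exact hle hw

/-- `Ω_Q ≅ T_X^∨` via `i`, and `T_X^∨ → Q^∨` is injective because the anchor is surjective. -/
theorem eq_of_mem_Omega_of_pair_eq (hsurj : Function.Surjective C.anchor)
    {i : (Vec O →ₗ[O] O) → Q} (hi_pair : ∀ (q : Q) α, C.pair q (i α) = α (C.anchor q))
    (hOmega : ∀ w ∈ C.Omega, ∃ α, w = i α) {w w' : Q} (hw : w ∈ C.Omega) (hw' : w' ∈ C.Omega)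
    (hpair : ∀ q, C.pair q w = C.pair q w') : w = w' := by
  obtain ⟨α, rfl⟩ := hOmega w hw
  obtain ⟨α', rfl⟩ := hOmega w' hw'
  have hcomp : α ∘ₗ C.anchor = α' ∘ₗ C.anchor := by
    ext q
    simpa [hi_pair] using hpair q
  rw [(LinearMap.cancel_right hsurj).mp hcomp]

end CourantAlgebroid

theorem gQhat_is_fibre_product_general
    (O : Type*) [CommRing O] [Algebra ℂ O]
    (Q : Type*) [AddCommGroup Q] [Module O Q]
    (C : CourantAlgebroid O Q)
    (hsurj : Function.Surjective C.anchor)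
    (i : (Vec O →ₗ[O] O) → Q)
    (hi_pair : ∀ (q : Q) α, C.pair q (i α) = α (C.anchor q))
    (hOmega : ∀ w ∈ C.Omega, ∃ α, w = i α)
    (hmem : ∀ α, i α ∈ C.Omega) :
    (∀ h ∈ LinearMap.ker C.anchor, ∀ w ∈ C.Omega, C.pair h w = 0)
    ∧ (∀ lam : Q →ₗ[O] O, (∀ w ∈ C.Omega, lam w = 0) →
        ∀ b ∈ LinearMap.ker C.anchor, (∀ c ∈ LinearMap.ker C.anchor, lam c = C.pair b c) →
        ∃! h : Q, h ∈ LinearMap.ker C.anchor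
          ∧ (∀ q : Q, C.pair h q = lam q)
          ∧ h - b ∈ C.Omega) := by
  refine ⟨fun h hh w hw => C.pair_eq_zero_of_mem_ker_anchor_of_mem_Omega hh hw, ?_⟩
  intro lam _ b hb hagree
  have hker : LinearMap.ker C.anchor ≤ LinearMap.ker (lam - C.pair b) := fun c hc => by
    simp [hagree c hc]
  obtain ⟨α, hα⟩ := LinearMap.exists_comp_eq_of_ker_le hsurj hker
  have hpair_iα : ∀ q, C.pair q (i α) = lam q - C.pair b q := fun q => by
    rw [hi_pair, ← LinearMap.comp_apply, hα, LinearMap.sub_apply]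
  refine ⟨b + i α, ⟨add_mem hb (C.Omega_le_ker_anchor (hmem α)), fun q => ?_,
    by rw [add_sub_cancel_left]; exact hmem α⟩, ?_⟩
  · rw [map_add, LinearMap.add_apply, C.pair_symm (i α), hpair_iα, add_sub_cancel]
  · rintro h' ⟨-, hpair', hdiff⟩
    have : h' - b = i α := C.eq_of_mem_Omega_of_pair_eq hsurj hi_pair hOmega hdiff (hmem α)
      fun q => by rw [hpair_iα, C.pair_symm, map_sub, LinearMap.sub_apply, hpair']
    exact eq_add_of_sub_eq' this

/-- for a Courant extension `Â` (here `Q`) of a transitive Lie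
algebroid `A = Q̄` with `g = ker π_A`, the square formed by
`g(Â) → A^∨` (pairing), `g(Â) → g` (projection mod `Ω¹`), `A^∨ → g^∨`
(restriction) and `g → g^∨` (induced pairing) is Cartesian, so that
`g(Â) ≅ A^∨ ×_{g^∨} g` canonically.  Concretely: pairing against an element
of `g(Â) = ker π_Q` yields a functional killing `Ω_Q` (i.e. a functional on
`A`), and for every functional `lam` on `A` and every `b ∈ g(Â)` (representing
an element of `g` mod `Ω_Q`) whose restrictions to `g` agree, there is a unique
element `h` of `g(Â)` inducing `lam` via the pairing and congruent to `b`
modulo `Ω¹ = Ω_Q`. -/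
theorem gQhat_is_fibre_product
    (O : Type*) [CommRing O] [Algebra ℂ O]
    (Q : Type*) [AddCommGroup Q] [Module O Q]
    (C : CourantAlgebroid O Q)
    (hsurj : Function.Surjective C.anchor)
    (i : (Vec O →ₗ[O] O) → Q)
    (hi_add : ∀ α β, i (α + β) = i α + i β)
    (hi_smul : ∀ (f : O) α, i (f • α) = f • i α)
    (hi_par : ∀ f : O, C.par f = i (evalForm O f))
    (hi_pair : ∀ (q : Q) α, C.pair q (i α) = α (C.anchor q))
    (hi_inj : Function.Injective i)
    (hOmega : ∀ w ∈ C.Omega, ∃ α, w = i α)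
    (hmem : ∀ α, i α ∈ C.Omega) :
    (∀ h ∈ LinearMap.ker C.anchor, ∀ w ∈ C.Omega, C.pair h w = 0)
    ∧ (∀ lam : Q →ₗ[O] O, (∀ w ∈ C.Omega, lam w = 0) →
        ∀ b ∈ LinearMap.ker C.anchor, (∀ c ∈ LinearMap.ker C.anchor, lam c = C.pair b c) →
        ∃! h : Q, h ∈ LinearMap.ker C.anchor
          ∧ (∀ q : Q, C.pair h q = lam q)
          ∧ h - b ∈ C.Omega) :=
  gQhat_is_fibre_product_general O Q C hsurj i hi_pair hOmega hmem
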